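/- For an N-photon cascade (M = m_1 = n_1 = ⋯ = n_N = 1), the reduced operator H_{1,red} = ζ^{−1} Π_{l=1}^N (𝒩_l + ζ∂_ζ) + ζ(r − ζ∂_ζ), with 𝒩_{l'} = 0 for some l', acting on polynomials of degree ≤ r, equals J⁻ Π_{l=1, l≠l'}^N (J⁰ + 𝒩_l + r/2) − J⁺, where J⁺ = ζ²∂_ζ − rζ, J⁰ = ζ∂_ζ − r/2, J⁻ = ∂_ζ. -/
import Mathlib


open Polynomial

/-- The Euler operator `ζ∂_ζ`. -/
noncomputable def euler : Module.End ℝ (Polynomial ℝ) :=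
  (LinearMap.mulLeft ℝ (X : Polynomial ℝ)).comp derivative

/-- `J⁻ = ∂_ζ`. -/
noncomputable def Jm : Module.End ℝ (Polynomial ℝ) := derivative

/-- `J⁰ = ζ∂_ζ - r/2`. -/
noncomputable def J0 (r : ℝ) : Module.End ℝ (Polynomial ℝ) := euler - (r / 2) • 1

/-- `J⁺ = ζ²∂_ζ - rζ`. -/
noncomputable def Jp (r : ℝ) : Module.End ℝ (Polynomial ℝ) :=
  (LinearMap.mulLeft ℝ ((X : Polynomial ℝ) ^ 2)).comp derivative -
    r • LinearMap.mulLeft ℝ (X : Polynomial ℝ)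

/-- The reduced Hamiltonian for an `N`-photon cascade:
`H₁,red = ζ⁻¹ Π_{l=1}^N (𝒩_l + ζ∂_ζ) + ζ (r - ζ∂_ζ)` (the `ζ⁻¹` implemented by
`Polynomial.divX`). -/
noncomputable def H1redCascade {N : ℕ} (𝒩 : Fin N → ℕ) (r : ℕ) (P : Polynomial ℝ) :
    Polynomial ℝ :=
  divX ((Polynomial.aeval euler (∏ l : Fin N, (X + C (𝒩 l : ℝ)))) P) +
    X * ((r : ℝ) • P - euler P)

lemma euler_monomial (n : ℕ) (a : ℝ) : euler (monomial n a) = (n : ℝ) • monomial n a := by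
  cases n with
  | zero => simp [euler]
  | succ m =>
    simp [euler, derivative_monomial, X_mul_monomial, smul_monomial]
    ring_nf

lemma eigen_pow (f : Module.End ℝ (Polynomial ℝ)) (c : ℝ) (v : Polynomial ℝ)
    (hv : f v = c • v) (n : ℕ) : (f ^ n) v = c ^ n • v := by
  induction n with
  | zero => simp
  | succ m ih =>
    rw [pow_succ, Module.End.mul_apply, hv, map_smul, ih, smul_smul, pow_succ, mul_comm]

lemma eigen_aeval (f : Module.End ℝ (Polynomial ℝ)) (c : ℝ) (v : Polynomial ℝ)
    (hv : f v = c • v) (q : Polynomial ℝ) :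
    (Polynomial.aeval f q) v = Polynomial.eval c q • v := by
  induction q using Polynomial.induction_on' with
  | add p q hp hq => simp [map_add, LinearMap.add_apply, hp, hq, add_smul]
  | monomial n a =>
    rw [aeval_monomial, eval_monomial]
    simp [Module.End.mul_apply, eigen_pow f c v hv n, Algebra.algebraMap_eq_smul_one,
      smul_smul]

lemma J0_monomial (r : ℝ) (n : ℕ) (a : ℝ) :
    J0 r (monomial n a) = ((n : ℝ) - r / 2) • monomial n a := by
  simp [J0, LinearMap.sub_apply, euler_monomial, sub_smul]

lemma divX_monomial_succ (m : ℕ) (b : ℝ) : divX (monomial (m + 1) b) = monomial m b := by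
  ext k
  simp [coeff_divX, coeff_monomial]

lemma Jp_monomial (r : ℝ) (n : ℕ) (a : ℝ) :
    Jp r (monomial n a) = ((n : ℝ) - r) • monomial (n + 1) a := by
  cases n with
  | zero => simp [Jp, X_mul_monomial, smul_monomial, C_mul_X_eq_monomial]
  | succ m =>
    simp only [Jp, LinearMap.sub_apply, LinearMap.comp_apply, LinearMap.mulLeft_apply,
      LinearMap.smul_apply, derivative_monomial, sq, mul_assoc, X_mul_monomial,
      smul_monomial, Nat.add_sub_cancel, smul_eq_mul]
    rw [← map_sub]
    congr 1
    push_cast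
    ring

/-- on polynomials of degree at most `r`, the reduced operator for an `N`-photon
cascade with `𝒩_{l'} = 0` equals `J⁻ Π_{l≠l'} (J⁰ + 𝒩_l + r/2) - J⁺`. -/
theorem photon_cascade_sl2_form {N : ℕ} (hN : 1 ≤ N) (𝒩 : Fin N → ℕ) (r : ℕ)
    (l' : Fin N) (hl' : 𝒩 l' = 0) :
    ∀ P ∈ degreeLE ℝ (r : ℕ),
      H1redCascade 𝒩 r P =
        ((Jm * Polynomial.aeval (J0 (r : ℝ))
          (∏ l ∈ Finset.univ.erase l', (X + C ((𝒩 l : ℝ) + (r : ℝ) / 2)))) - Jp (r : ℝ)) P := by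
  suffices h : ∀ P : Polynomial ℝ,
      H1redCascade 𝒩 r P =
        ((Jm * Polynomial.aeval (J0 (r : ℝ))
          (∏ l ∈ Finset.univ.erase l', (X + C ((𝒩 l : ℝ) + (r : ℝ) / 2)))) - Jp (r : ℝ)) P by
    exact fun P _ => h P
  intro P
  induction P using Polynomial.induction_on' with
  | add p q hp hq =>
    simp only [H1redCascade, map_add, divX_add, smul_add, map_smul] at *
    simp only [smul_eq_C_mul] at hp hq ⊢
    linear_combination hp + hq
  | monomial n a =>
    have hev : (Polynomial.aeval euler (∏ l : Fin N, (X + C (𝒩 l : ℝ)))) (monomial n a)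
        = ((n : ℝ) * ∏ l ∈ Finset.univ.erase l', ((n : ℝ) + (𝒩 l : ℝ))) • monomial n a := by
      rw [eigen_aeval euler (n : ℝ) _ (euler_monomial n a)]
      congr 1
      rw [eval_prod, ← Finset.mul_prod_erase _ _ (Finset.mem_univ l')]
      simp [hl']
    have hevA : (Polynomial.aeval (J0 (r : ℝ))
        (∏ l ∈ Finset.univ.erase l', (X + C ((𝒩 l : ℝ) + (r : ℝ) / 2)))) (monomial n a)
        = (∏ l ∈ Finset.univ.erase l', ((n : ℝ) + (𝒩 l : ℝ))) • monomial n a := by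
      rw [eigen_aeval (J0 (r : ℝ)) ((n : ℝ) - (r : ℝ) / 2) _ (J0_monomial _ n a)]
      congr 1
      rw [eval_prod]
      refine Finset.prod_congr rfl fun l _ => ?_
      simp only [eval_add, eval_X, eval_C]
      ring
    set c : ℝ := ∏ l ∈ Finset.univ.erase l', ((n : ℝ) + (𝒩 l : ℝ)) with hc
    simp only [H1redCascade, hev, LinearMap.sub_apply, Module.End.mul_apply, hevA,
      Jp_monomial, Jm, map_smul]
    cases n with
    | zero =>
      simp only [Nat.cast_zero, zero_mul, zero_smul, divX_zero, zero_add, map_smul]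
      rw [show euler ((monomial 0) a) = 0 by simpa using euler_monomial 0 a]
      simp [Jm, mul_smul_comm, X_mul_monomial, smul_monomial]
      rw [← C_eq_natCast, ← C_mul, mul_comm X, C_mul_X_eq_monomial]
    | succ m =>
      rw [euler_monomial]
      simp only [smul_eq_mul, smul_monomial, Nat.add_sub_cancel, divX_monomial_succ,
        derivative_monomial]
      rw [← map_sub, X_mul_monomial]
      have h1 : (monomial m) ((↑(m + 1) : ℝ) * c * a) = (monomial m) (c * (a * ↑(m + 1))) := by
        congr 1; ring
      have h2 : (monomial (m + 1 + 1)) ((↑r : ℝ) * a - ↑(m + 1) * a) =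
          -((monomial (m + 1 + 1)) (((↑(m + 1) : ℝ) - ↑r) * a)) := by
        rw [← map_neg]; congr 1; push_cast; ring
      rw [h1, h2, ← sub_eq_add_neg]
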